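/- arXiv:1801.01680 — 3 statements merged into one kernel-verified Lean document; each statement's English description precedes it below -/
import Mathlib

section
/- Let Ω ⊆ ℂ be a nonempty bounded open connected set, H₀ and H₁ complex Hilbert spaces, t₀ : Ω → H₀ a map whose range has dense linear span in H₀, t₁ : Ω → H₁ a map with t₁(w) ≠ 0 for all w ∈ Ω, and φ : Ω → ℂ a holomorphic function. Suppose X ∈ B(H₀,H₁) satisfies X(t₀(w)) = φ(w)·t₁(w) for all w ∈ Ω, and suppose that for every ε > 0 there exists δ > 0 such that every w ∈ Ω whose distance to the boundary of Ω is less than δ satisfies ‖t₀(w)‖ ≤ ε·‖t₁(w)‖. Then X = 0. -/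
/-!
Near `∂Ω` we have `‖φ w‖ ‖t₁ w‖ = ‖X (t₀ w)‖ ≤ ‖X‖ ‖t₀ w‖`, so the hypothesis on `‖t₀‖ / ‖t₁‖`
says that `φ` tends to `0` at the boundary. By the maximum modulus principle on the subdomains
`{w ∈ Ω | δ/2 < dist(w, ∂Ω)}` the holomorphic function `φ` vanishes on `Ω`. Hence `X` kills
every `t₀ w`, and therefore their dense span.
-/

open Metric Set

theorem closure_inter_setOf_lt_infDist_frontier_subset {α : Type*} [PseudoMetricSpace α]
    {U : Set α} (hU : IsOpen U) {r : ℝ} (hr : 0 < r) :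
    closure (U ∩ {w | r < infDist w (frontier U)}) ⊆ U := by
  intro x hx
  have hr_le : r ≤ infDist x (frontier U) :=
    closure_minimal (fun _ => le_of_lt)
      (isClosed_le continuous_const (continuous_infDist_pt _)) (closure_mono inter_subset_right hx)
  by_contra hxU
  have hx_frontier : x ∈ frontier U :=
    ⟨closure_mono inter_subset_left hx, by rwa [hU.interior_eq]⟩
  linarith [infDist_zero_of_mem hx_frontier]

section MaximumModulus

variable {E F : Type*} [NormedAddCommGroup E] [NormedSpace ℂ E] [Nontrivial E]
  [NormedAddCommGroup F] [NormedSpace ℂ F]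

theorem norm_le_of_forall_infDist_frontier_lt_norm_le {f : E → F} {U : Set E}
    (hUb : Bornology.IsBounded U) (hUo : IsOpen U) (hf : DifferentiableOn ℂ f U) {δ C : ℝ}
    (hδ : 0 < δ) (hC : ∀ w ∈ U, infDist w (frontier U) < δ → ‖f w‖ ≤ C) {z : E} (hz : z ∈ U) :
    ‖f z‖ ≤ C := by
  by_cases hz_near : infDist z (frontier U) < δ
  · exact hC z hz hz_near
  set s := U ∩ {w | δ / 2 < infDist w (frontier U)}
  have hs_open : IsOpen s := hUo.inter (isOpen_lt continuous_const (continuous_infDist_pt _))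
  have hs_closure : closure s ⊆ U := closure_inter_setOf_lt_infDist_frontier_subset hUo (by linarith)
  have hs_frontier : ∀ x ∈ frontier s, ‖f x‖ ≤ C := by
    intro x hx
    have hxU : x ∈ U := hs_closure hx.1
    have hxs : x ∉ s := fun hxs => hx.2 (by rwa [hs_open.interior_eq])
    have hx_near : infDist x (frontier U) ≤ δ / 2 := by
      by_contra h
      exact hxs ⟨hxU, not_le.1 h⟩
    exact hC x hxU (by linarith)
  have hzs : z ∈ s := ⟨hz, show δ / 2 < _ by linarith [not_lt.1 hz_near]⟩
  exact Complex.norm_le_of_forall_mem_frontier_norm_le (hUb.subset inter_subset_left)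
    (hf.mono hs_closure).diffContOnCl hs_frontier (subset_closure hzs)

theorem eqOn_zero_of_forall_infDist_frontier_lt_norm_le {f : E → F} {U : Set E}
    (hUb : Bornology.IsBounded U) (hUo : IsOpen U) (hf : DifferentiableOn ℂ f U)
    (hlim : ∀ ε > 0, ∃ δ > 0, ∀ w ∈ U, infDist w (frontier U) < δ → ‖f w‖ ≤ ε) :
    EqOn f 0 U := by
  intro z hz
  refine norm_le_zero_iff.1 (le_of_forall_pos_le_add fun ε hε => ?_)
  obtain ⟨δ, hδ, hC⟩ := hlim ε hε
  simpa using norm_le_of_forall_infDist_frontier_lt_norm_le hUb hUo hf hδ hC hz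

end MaximumModulus

theorem norm_le_opNorm_mul_of_apply_eq_smul {𝕜 E F : Type*} [NontriviallyNormedField 𝕜]
    [SeminormedAddCommGroup E] [NormedSpace 𝕜 E] [NormedAddCommGroup F] [NormedSpace 𝕜 F]
    (X : E →L[𝕜] F) {v : E} {u : F} {c : 𝕜} {ε : ℝ} (hXv : X v = c • u) (hu : u ≠ 0)
    (hv : ‖v‖ ≤ ε * ‖u‖) : ‖c‖ ≤ ‖X‖ * ε := by
  refine le_of_mul_le_mul_right ?_ (norm_pos_iff.2 hu)
  calc ‖c‖ * ‖u‖ = ‖X v‖ := by rw [hXv, norm_smul]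
    _ ≤ ‖X‖ * ‖v‖ := X.le_opNorm v
    _ ≤ ‖X‖ * (ε * ‖u‖) := by gcongr
    _ = ‖X‖ * ε * ‖u‖ := by ring

theorem stmt1_general {H₀ H₁ : Type*}
    [NormedAddCommGroup H₀] [InnerProductSpace ℂ H₀]
    [NormedAddCommGroup H₁] [InnerProductSpace ℂ H₁]
    (Ω : Set ℂ) (hΩo : IsOpen Ω) (hΩb : Bornology.IsBounded Ω)
    (t₀ : ℂ → H₀) (t₁ : ℂ → H₁) (φ : ℂ → ℂ)
    (hdense : Dense (Submodule.span ℂ (t₀ '' Ω) : Set H₀))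
    (ht₁ : ∀ w ∈ Ω, t₁ w ≠ 0)
    (hφ : DifferentiableOn ℂ φ Ω)
    (X : H₀ →L[ℂ] H₁)
    (hX : ∀ w ∈ Ω, X (t₀ w) = φ w • t₁ w)
    (hbd : ∀ ε > 0, ∃ δ > 0, ∀ w ∈ Ω,
      Metric.infDist w (frontier Ω) < δ → ‖t₀ w‖ ≤ ε * ‖t₁ w‖) :
    X = 0 := by
  have hφ_zero : EqOn φ 0 Ω := by
    refine eqOn_zero_of_forall_infDist_frontier_lt_norm_le hΩb hΩo hφ fun ε hε => ?_
    obtain ⟨δ, hδ, hnear⟩ := hbd (ε / (‖X‖ + 1)) (by positivity)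
    refine ⟨δ, hδ, fun w hw hw_near => ?_⟩
    calc ‖φ w‖ ≤ ‖X‖ * (ε / (‖X‖ + 1)) :=
          norm_le_opNorm_mul_of_apply_eq_smul X (hX w hw) (ht₁ w hw) (hnear w hw hw_near)
      _ ≤ ε := by
          rw [← mul_div_assoc, div_le_iff₀ (by positivity)]
          nlinarith
  refine ContinuousLinearMap.ext_on hdense ?_
  rintro _ ⟨w, hw, rfl⟩
  simp [hX w hw, hφ_zero hw]

/-- if `X t₀(w) = φ(w) • t₁(w)` on `Ω`, the span of the range of `t₀` is dense,
`t₁` never vanishes, `φ` is holomorphic, and `‖t₀(w)‖/‖t₁(w)‖ → 0` as `w` approaches `∂Ω`,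
then `X = 0`. -/
theorem stmt1 {H₀ H₁ : Type*}
    [NormedAddCommGroup H₀] [InnerProductSpace ℂ H₀]
    [NormedAddCommGroup H₁] [InnerProductSpace ℂ H₁]
    (Ω : Set ℂ) (hΩo : IsOpen Ω) (hΩc : IsConnected Ω) (hΩb : Bornology.IsBounded Ω)
    (t₀ : ℂ → H₀) (t₁ : ℂ → H₁) (φ : ℂ → ℂ)
    (hdense : Dense (Submodule.span ℂ (t₀ '' Ω) : Set H₀))
    (ht₁ : ∀ w ∈ Ω, t₁ w ≠ 0)
    (hφ : DifferentiableOn ℂ φ Ω)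
    (X : H₀ →L[ℂ] H₁)
    (hX : ∀ w ∈ Ω, X (t₀ w) = φ w • t₁ w)
    (hbd : ∀ ε > 0, ∃ δ > 0, ∀ w ∈ Ω,
      Metric.infDist w (frontier Ω) < δ → ‖t₀ w‖ ≤ ε * ‖t₁ w‖) :
    X = 0 :=
  stmt1_general Ω hΩo hΩb t₀ t₁ φ hdense ht₁ hφ X hX hbd
end

section
/- Assume: (i) the only operator A ∈ B(K₀,H₀) with T₀A = AT̃₀ is A = 0, and (ii) the only operator B ∈ B(H₁,K₁) with T̃₁B = BT₁ is B = 0. Suppose U : H₀⊕H₁ → K₀⊕K₁ is unitary with UT = T̃U, with block decomposition U = [[U₀₀, U₀₁],[U₁₀, U₁₁]]. Then: U₀₀ = U₀₁∘X* and U₁₁ = −U₁₀∘X; U₀₁ and U₁₀ are invertible; U₁₀T₀ = T̃₁U₁₀ (so U₁₀T₀U₁₀⁻¹ = T̃₁) and T₁U₀₁* = U₀₁*T̃₀ (so (U₀₁*)⁻¹T₁U₀₁* = T̃₀); U₁₀*∘U₁₀ = (1 + X∘X*)⁻¹ and U₀₁*∘U₀₁ = (1 + X*∘X)⁻¹; and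 T̃₀∘(Y − U₀₁∘X*∘U₁₀⁻¹) = (Y − U₀₁∘X*∘U₁₀⁻¹)∘T̃₁. -/
/-!
The `(1,0)` block of `U T = T̃ U` says that `U₁₀` intertwines `T₀` with `T̃₁`; together with it, the
`(1,1)` and `(0,0)` blocks say that `U₁₀ X + U₁₁` intertwines `T₁` with `T̃₁` and `U₀₀ - Y U₁₀`
intertwines `T₀` with `T̃₀` (these are blocks of `[[1, -Y], [0, 1]] U [[1, X], [0, 1]]`, which
intertwines the diagonal parts of `T` and `T̃`). Hypothesis (ii) kills `U₁₀ X + U₁₁`, and the same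
computation for `U*`, which intertwines `T̃` with `T`, together with (i) gives `U₀₀ = U₀₁ X*`.
Substituting both into `U* U = U U* = 1` shows that `(1 + X* X) U₀₁*` and `(1 + X X*) U₁₀*`
are two-sided inverses of `U₀₁` and `U₁₀`. Finally `Y - U₀₁ X* U₁₀⁻¹ = -(U₀₀ - Y U₁₀) U₁₀⁻¹` is a
product of intertwiners.
-/

open ContinuousLinearMap

noncomputable def blockOp {H₀ H₁ K₀ K₁ : Type*}
    [NormedAddCommGroup H₀] [InnerProductSpace ℂ H₀]
    [NormedAddCommGroup H₁] [InnerProductSpace ℂ H₁]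
    [NormedAddCommGroup K₀] [InnerProductSpace ℂ K₀]
    [NormedAddCommGroup K₁] [InnerProductSpace ℂ K₁]
    (A : H₀ →L[ℂ] K₀) (B : H₁ →L[ℂ] K₀) (C : H₀ →L[ℂ] K₁) (D : H₁ →L[ℂ] K₁) :
    WithLp 2 (H₀ × H₁) →L[ℂ] WithLp 2 (K₀ × K₁) :=
  (((WithLp.prodContinuousLinearEquiv 2 ℂ K₀ K₁).symm : (K₀ × K₁) →L[ℂ] WithLp 2 (K₀ × K₁)) ∘L
    ((A.coprod B).prod (C.coprod D))) ∘L
    ((WithLp.prodContinuousLinearEquiv 2 ℂ H₀ H₁ : WithLp 2 (H₀ × H₁) →L[ℂ] (H₀ × H₁)))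

section BlockOperators

variable {H₀ H₁ K₀ K₁ L₀ L₁ : Type*}
    [NormedAddCommGroup H₀] [InnerProductSpace ℂ H₀]
    [NormedAddCommGroup H₁] [InnerProductSpace ℂ H₁]
    [NormedAddCommGroup K₀] [InnerProductSpace ℂ K₀]
    [NormedAddCommGroup K₁] [InnerProductSpace ℂ K₁]
    [NormedAddCommGroup L₀] [InnerProductSpace ℂ L₀]
    [NormedAddCommGroup L₁] [InnerProductSpace ℂ L₁]

@[simp]
lemma ofLp_blockOp_apply (A : H₀ →L[ℂ] K₀) (B : H₁ →L[ℂ] K₀) (C : H₀ →L[ℂ] K₁)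
    (D : H₁ →L[ℂ] K₁) (x : WithLp 2 (H₀ × H₁)) :
    (blockOp A B C D x).ofLp = (A x.ofLp.1 + B x.ofLp.2, C x.ofLp.1 + D x.ofLp.2) := rfl

lemma blockOp_comp_blockOp (A : K₀ →L[ℂ] L₀) (B : K₁ →L[ℂ] L₀) (C : K₀ →L[ℂ] L₁)
    (D : K₁ →L[ℂ] L₁) (E : H₀ →L[ℂ] K₀) (F : H₁ →L[ℂ] K₀) (G : H₀ →L[ℂ] K₁)
    (K : H₁ →L[ℂ] K₁) :
    blockOp A B C D ∘L blockOp E F G K =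
      blockOp (A ∘L E + B ∘L G) (A ∘L F + B ∘L K) (C ∘L E + D ∘L G) (C ∘L F + D ∘L K) := by
  ext x : 1
  refine WithLp.ofLp_injective 2 (Prod.ext ?_ ?_) <;> simp <;> abel

lemma blockOp_one_zero_zero_one :
    blockOp (1 : H₀ →L[ℂ] H₀) 0 0 (1 : H₁ →L[ℂ] H₁) = 1 := by
  ext x : 1
  refine WithLp.ofLp_injective 2 (Prod.ext ?_ ?_) <;> simp

lemma blockOp_inj {A A' : H₀ →L[ℂ] K₀} {B B' : H₁ →L[ℂ] K₀} {C C' : H₀ →L[ℂ] K₁}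
    {D D' : H₁ →L[ℂ] K₁} (h : blockOp A B C D = blockOp A' B' C' D') :
    A = A' ∧ B = B' ∧ C = C' ∧ D = D' := by
  have h₀ (v : H₀) := congrArg WithLp.ofLp (DFunLike.congr_fun h (WithLp.toLp 2 (v, 0)))
  have h₁ (v : H₁) := congrArg WithLp.ofLp (DFunLike.congr_fun h (WithLp.toLp 2 (0, v)))
  simp only [ofLp_blockOp_apply, map_zero, add_zero, zero_add, Prod.mk.injEq] at h₀ h₁
  exact ⟨ext fun v ↦ (h₀ v).1, ext fun v ↦ (h₁ v).1, ext fun v ↦ (h₀ v).2, ext fun v ↦ (h₁ v).2⟩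

lemma adjoint_blockOp [CompleteSpace H₀] [CompleteSpace H₁] [CompleteSpace K₀]
    [CompleteSpace K₁] (A : H₀ →L[ℂ] K₀) (B : H₁ →L[ℂ] K₀) (C : H₀ →L[ℂ] K₁)
    (D : H₁ →L[ℂ] K₁) :
    adjoint (blockOp A B C D) = blockOp (adjoint A) (adjoint C) (adjoint B) (adjoint D) := by
  refine ((eq_adjoint_iff _ _).mpr fun x y ↦ ?_).symm
  simp only [WithLp.prod_inner_apply, ofLp_blockOp_apply, inner_add_left, inner_add_right,
    adjoint_inner_left]
  ring

theorem blocks_of_intertwines_triangular {T₀ : H₀ →L[ℂ] H₀} {T₁ : H₁ →L[ℂ] H₁} {X : H₁ →L[ℂ] H₀}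
    {T' : K₀ →L[ℂ] K₀} {T'' : K₁ →L[ℂ] K₁} {Y : K₁ →L[ℂ] K₀}
    {U₀₀ : H₀ →L[ℂ] K₀} {U₀₁ : H₁ →L[ℂ] K₀} {U₁₀ : H₀ →L[ℂ] K₁} {U₁₁ : H₁ →L[ℂ] K₁}
    (h : blockOp U₀₀ U₀₁ U₁₀ U₁₁ ∘L blockOp T₀ (X ∘L T₁ - T₀ ∘L X) 0 T₁
        = blockOp T' (Y ∘L T'' - T' ∘L Y) 0 T'' ∘L blockOp U₀₀ U₀₁ U₁₀ U₁₁) :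
    U₁₀ ∘L T₀ = T'' ∘L U₁₀ ∧
    (U₁₀ ∘L X + U₁₁) ∘L T₁ = T'' ∘L (U₁₀ ∘L X + U₁₁) ∧
    (U₀₀ - Y ∘L U₁₀) ∘L T₀ = T' ∘L (U₀₀ - Y ∘L U₁₀) := by
  rw [blockOp_comp_blockOp, blockOp_comp_blockOp] at h
  obtain ⟨h₀₀, -, h₁₀, h₁₁⟩ := blockOp_inj h
  simp only [comp_zero, zero_comp, add_zero, zero_add, comp_sub, sub_comp, comp_add, add_comp,
    comp_assoc] at h₀₀ h₁₀ h₁₁ ⊢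
  have h₁₀X : U₁₀ ∘L T₀ ∘L X = T'' ∘L U₁₀ ∘L X := by rw [← comp_assoc, h₁₀, comp_assoc]
  refine ⟨h₁₀, ?_, ?_⟩
  · rw [← h₁₀X, ← h₁₁]; abel
  · rw [h₁₀, h₀₀]; abel

end BlockOperators

section Inverse

variable {R M N : Type*} [Semiring R] [TopologicalSpace M] [AddCommMonoid M] [Module R M]
    [TopologicalSpace N] [AddCommMonoid N] [Module R N]

theorem comp_eq_comp_of_inverse {f : M →L[R] N} {g : N →L[R] M} {S : M →L[R] M}
    {T : N →L[R] N} (hgf : g ∘L f = 1) (hfg : f ∘L g = 1) (h : f ∘L S = T ∘L f) :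
    S ∘L g = g ∘L T :=
  calc S ∘L g = (g ∘L f) ∘L S ∘L g := by rw [hgf, one_def, id_comp]
    _ = g ∘L (T ∘L f) ∘L g := by rw [← h]; rfl
    _ = g ∘L T := by rw [comp_assoc T, hfg, one_def, comp_id]

end Inverse

section Unitary

variable {H₀ H₁ K₀ K₁ : Type*}
    [NormedAddCommGroup H₀] [InnerProductSpace ℂ H₀] [CompleteSpace H₀]
    [NormedAddCommGroup H₁] [InnerProductSpace ℂ H₁] [CompleteSpace H₁]
    [NormedAddCommGroup K₀] [InnerProductSpace ℂ K₀] [CompleteSpace K₀]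
    [NormedAddCommGroup K₁] [InnerProductSpace ℂ K₁] [CompleteSpace K₁]
    {X : H₁ →L[ℂ] H₀} {U₀₁ : H₁ →L[ℂ] K₀} {U₁₀ : H₀ →L[ℂ] K₁}

theorem rightInverses_of_comp_adjoint_eq_one
    (h : blockOp (U₀₁ ∘L adjoint X) U₀₁ U₁₀ (-(U₁₀ ∘L X))
        ∘L adjoint (blockOp (U₀₁ ∘L adjoint X) U₀₁ U₁₀ (-(U₁₀ ∘L X))) = 1) :
    U₀₁ ∘L (1 + adjoint X ∘L X) ∘L adjoint U₀₁ = 1 ∧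
    U₁₀ ∘L (1 + X ∘L adjoint X) ∘L adjoint U₁₀ = 1 := by
  rw [adjoint_blockOp, blockOp_comp_blockOp, ← blockOp_one_zero_zero_one] at h
  obtain ⟨h₀₀, -, -, h₁₁⟩ := blockOp_inj h
  simp only [adjoint_comp, map_neg, adjoint_adjoint, comp_neg, neg_comp, neg_neg, comp_assoc]
    at h₀₀ h₁₁
  simp only [add_comp, comp_add, one_def, id_comp, comp_assoc]
  exact ⟨by rwa [add_comm], h₁₁⟩

theorem leftInverses_of_adjoint_comp_eq_one
    (h : adjoint (blockOp (U₀₁ ∘L adjoint X) U₀₁ U₁₀ (-(U₁₀ ∘L X)))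
        ∘L blockOp (U₀₁ ∘L adjoint X) U₀₁ U₁₀ (-(U₁₀ ∘L X)) = 1) :
    (1 + X ∘L adjoint X) ∘L adjoint U₁₀ ∘L U₁₀ = 1 ∧
    (1 + adjoint X ∘L X) ∘L adjoint U₀₁ ∘L U₀₁ = 1 := by
  rw [adjoint_blockOp, blockOp_comp_blockOp, ← blockOp_one_zero_zero_one] at h
  obtain ⟨h₀₀, h₀₁, h₁₀, h₁₁⟩ := blockOp_inj h
  simp only [adjoint_comp, map_neg, adjoint_adjoint, comp_neg, neg_comp, neg_neg, comp_assoc,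
    add_neg_eq_zero] at h₀₀ h₀₁ h₁₀ h₁₁
  simp only [add_comp, one_def, id_comp, comp_assoc]
  constructor
  · rw [← h₁₀, add_comm]; exact h₀₀
  · rw [h₀₁]; exact h₁₁

end Unitary

/-- necessary conditions on the blocks of a unitary intertwining
`T = [[T₀, XT₁-T₀X],[0,T₁]]` and `T̃ = [[T̃₀, YT̃₁-T̃₀Y],[0,T̃₁]]`. -/
theorem stmt2 {H₀ H₁ K₀ K₁ : Type*}
    [NormedAddCommGroup H₀] [InnerProductSpace ℂ H₀] [CompleteSpace H₀]
    [NormedAddCommGroup H₁] [InnerProductSpace ℂ H₁] [CompleteSpace H₁]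
    [NormedAddCommGroup K₀] [InnerProductSpace ℂ K₀] [CompleteSpace K₀]
    [NormedAddCommGroup K₁] [InnerProductSpace ℂ K₁] [CompleteSpace K₁]
    (T₀ : H₀ →L[ℂ] H₀) (T₁ : H₁ →L[ℂ] H₁) (X : H₁ →L[ℂ] H₀)
    (T' : K₀ →L[ℂ] K₀) (T'' : K₁ →L[ℂ] K₁) (Y : K₁ →L[ℂ] K₀)
    (h1 : ∀ A : K₀ →L[ℂ] H₀, T₀ ∘L A = A ∘L T' → A = 0)
    (h2 : ∀ B : H₁ →L[ℂ] K₁, T'' ∘L B = B ∘L T₁ → B = 0)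
    (U₀₀ : H₀ →L[ℂ] K₀) (U₀₁ : H₁ →L[ℂ] K₀) (U₁₀ : H₀ →L[ℂ] K₁) (U₁₁ : H₁ →L[ℂ] K₁)
    (U : WithLp 2 (H₀ × H₁) →L[ℂ] WithLp 2 (K₀ × K₁))
    (hU : U = blockOp U₀₀ U₀₁ U₁₀ U₁₁)
    (hU1 : adjoint U ∘L U = ContinuousLinearMap.id ℂ _)
    (hU2 : U ∘L adjoint U = ContinuousLinearMap.id ℂ _)
    (hUT : U ∘L blockOp T₀ (X ∘L T₁ - T₀ ∘L X) 0 T₁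
        = blockOp T' (Y ∘L T'' - T' ∘L Y) 0 T'' ∘L U) :
    U₀₀ = U₀₁ ∘L adjoint X ∧
    U₁₁ = -(U₁₀ ∘L X) ∧
    (∃ V₀₁ : K₀ →L[ℂ] H₁, U₀₁ ∘L V₀₁ = 1 ∧ V₀₁ ∘L U₀₁ = 1) ∧
    U₁₀ ∘L T₀ = T'' ∘L U₁₀ ∧
    T₁ ∘L adjoint U₀₁ = adjoint U₀₁ ∘L T' ∧
    (adjoint U₁₀ ∘L U₁₀) ∘L (1 + X ∘L adjoint X) = 1 ∧
    (1 + X ∘L adjoint X) ∘L (adjoint U₁₀ ∘L U₁₀) = 1 ∧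
    (adjoint U₀₁ ∘L U₀₁) ∘L (1 + adjoint X ∘L X) = 1 ∧
    (1 + adjoint X ∘L X) ∘L (adjoint U₀₁ ∘L U₀₁) = 1 ∧
    ∃ V₁₀ : K₁ →L[ℂ] H₀, U₁₀ ∘L V₁₀ = 1 ∧ V₁₀ ∘L U₁₀ = 1 ∧
      T' ∘L (Y - U₀₁ ∘L adjoint X ∘L V₁₀) = (Y - U₀₁ ∘L adjoint X ∘L V₁₀) ∘L T'' := by
  subst hU
  obtain ⟨hU₁₀, hdiag, hW⟩ := blocks_of_intertwines_triangular hUT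
  have hUT' := comp_eq_comp_of_inverse hU1 hU2 hUT
  rw [adjoint_blockOp] at hUT'
  obtain ⟨hU₀₁, -, hW'⟩ := blocks_of_intertwines_triangular hUT'.symm
  obtain rfl : U₁₁ = -(U₁₀ ∘L X) := eq_neg_of_add_eq_zero_right (h2 _ hdiag.symm)
  obtain rfl : U₀₀ = U₀₁ ∘L adjoint X := by
    simpa [adjoint_comp] using congrArg adjoint (sub_eq_zero.mp (h1 _ hW'.symm))
  obtain ⟨hR₀₁, hR₁₀⟩ := rightInverses_of_comp_adjoint_eq_one hU2
  obtain ⟨hL₁₀, hL₀₁⟩ := leftInverses_of_adjoint_comp_eq_one hU1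
  set V₁₀ := (1 + X ∘L adjoint X) ∘L adjoint U₁₀
  have hV₁₀ : V₁₀ ∘L U₁₀ = 1 := hL₁₀
  have hT₀V₁₀ : T₀ ∘L V₁₀ = V₁₀ ∘L T'' := comp_eq_comp_of_inverse hV₁₀ hR₁₀ hU₁₀
  have hYV₁₀ : Y - U₀₁ ∘L adjoint X ∘L V₁₀ = -((U₀₁ ∘L adjoint X - Y ∘L U₁₀) ∘L V₁₀) := by
    rw [sub_comp, comp_assoc Y, hR₁₀, one_def, comp_id, comp_assoc, neg_sub]
  refine ⟨rfl, rfl, ⟨_, hR₀₁, hL₀₁⟩, hU₁₀, hU₀₁.symm,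
    by simpa [adjoint_comp, adjoint_one] using congrArg adjoint hL₁₀, hL₁₀,
    by simpa [adjoint_comp, adjoint_one] using congrArg adjoint hL₀₁, hL₀₁, V₁₀, hR₁₀, hV₁₀, ?_⟩
  rw [hYV₁₀, comp_neg, neg_comp, ← comp_assoc T', ← hW, comp_assoc _ T₀, hT₀V₁₀, comp_assoc _ V₁₀]
end

section
/- Let Ω ⊆ ℂ be a bounded open set, let (e_n) be a sequence of functions e_n : Ω → ℂ, and let (α_n) and (s_n) be sequences of positive reals such that: (a) for every w ∈ Ω the series Σ_n α_n|e_n(w)|² converges; (b) s_n/α_n → 0 as n → ∞; (c) for every N there is a constant M_N with Σ_{n=0}^{N} s_n|e_n(w)|² ≤ M_N for all w ∈ Ω; (d) for every C > 0 there exists δ > 0 such that Σ_n α_n|e_n(w)|² ≥ C whenever w ∈ Ω has distance less than δ to the boundary of Ω. Then for every w ∈ Ω the series Σ_n s_n|e_n(w)|² converges, and for every ε > 0 there exists δ > 0 such that Σ_n s_n|e_n(w)|² ≤ ε · Σ_n α_n|e_n(w)|² for all w ∈ Ω whose distance to the boundary of Ω is less than δ. -/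
/-- construction of a dominated kernel: if `s_n/α_n → 0`, the partial sums
`Σ_{n≤N} s_n|e_n(w)|²` are bounded on `Ω`, and `Σ_n α_n|e_n(w)|² → ∞` at the boundary,
then `Σ_n s_n|e_n(w)|²` converges and is eventually dominated by `ε Σ_n α_n|e_n(w)|²`
near the boundary. -/
theorem stmt9 (Ω : Set ℂ) (hΩo : IsOpen Ω) (hΩb : Bornology.IsBounded Ω)
    (e : ℕ → ℂ → ℂ) (α s : ℕ → ℝ)
    (hα : ∀ n, 0 < α n) (hs : ∀ n, 0 < s n)
    (ha : ∀ w ∈ Ω, Summable (fun n => α n * ‖e n w‖ ^ 2))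
    (hb : Filter.Tendsto (fun n => s n / α n) Filter.atTop (nhds 0))
    (hc : ∀ N : ℕ, ∃ M : ℝ, ∀ w ∈ Ω,
      ∑ n ∈ Finset.range (N + 1), s n * ‖e n w‖ ^ 2 ≤ M)
    (hd : ∀ C > 0, ∃ δ > 0, ∀ w ∈ Ω, Metric.infDist w (frontier Ω) < δ →
      C ≤ ∑' n, α n * ‖e n w‖ ^ 2) :
    (∀ w ∈ Ω, Summable (fun n => s n * ‖e n w‖ ^ 2)) ∧
    ∀ ε > 0, ∃ δ > 0, ∀ w ∈ Ω, Metric.infDist w (frontier Ω) < δ →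
      ∑' n, s n * ‖e n w‖ ^ 2 ≤ ε * ∑' n, α n * ‖e n w‖ ^ 2 := by
  have key : ∀ ε : ℝ, 0 < ε → ∃ N : ℕ, ∀ n ≥ N, s n ≤ ε * α n := by
    intro ε hε
    obtain ⟨N, hN⟩ := (Metric.tendsto_atTop.mp hb) ε hε
    refine ⟨N, fun n hn => ?_⟩
    have h := hN n hn
    rw [Real.dist_eq, sub_zero, abs_of_pos (div_pos (hs n) (hα n))] at h
    have hαn := hα n
    have : s n / α n * α n ≤ ε * α n :=
      mul_le_mul_of_nonneg_right h.le hαn.le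
    rwa [div_mul_cancel₀ _ hαn.ne'] at this
  have hsum : ∀ w ∈ Ω, Summable (fun n => s n * ‖e n w‖ ^ 2) := by
    intro w hw
    obtain ⟨N, hN⟩ := key 1 one_pos
    rw [← summable_nat_add_iff N]
    refine Summable.of_nonneg_of_le (fun n => mul_nonneg (hs _).le (by positivity)) (fun n => ?_)
      ((summable_nat_add_iff N).2 (ha w hw))
    have h1 : s (n + N) ≤ 1 * α (n + N) := hN (n + N) (Nat.le_add_left N n)
    rw [one_mul] at h1
    exact mul_le_mul_of_nonneg_right h1 (by positivity)
  refine ⟨hsum, fun ε hε => ?_⟩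
  obtain ⟨N, hN⟩ := key (ε / 2) (by positivity)
  obtain ⟨M, hM⟩ := hc N
  obtain ⟨δ, hδ, hδ'⟩ := hd (max (2 * M / ε) 1) (lt_of_lt_of_le one_pos (le_max_right _ _))
  refine ⟨δ, hδ, fun w hw hwd => ?_⟩
  set A := ∑' n, α n * ‖e n w‖ ^ 2 with hA
  have hAge : max (2 * M / ε) 1 ≤ A := hδ' w hw hwd
  have hA1 : 2 * M / ε ≤ A := le_trans (le_max_left _ _) hAge
  have hhead : M ≤ ε / 2 * A := by
    rw [div_le_iff₀ hε] at hA1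
    nlinarith
  have hsw := hsum w hw
  have haw := ha w hw
  have hsplit := (Summable.sum_add_tsum_nat_add (f := fun n => s n * ‖e n w‖ ^ 2) (N + 1) hsw).symm
  have hαtail := (summable_nat_add_iff (N + 1)).2 haw
  have hstail := (summable_nat_add_iff (N + 1)).2 hsw
  have htail : (∑' n, s (n + (N + 1)) * ‖e (n + (N + 1)) w‖ ^ 2)
      ≤ ε / 2 * A := by
    have h1 : (∑' n, s (n + (N + 1)) * ‖e (n + (N + 1)) w‖ ^ 2)
        ≤ ∑' n, ε / 2 * (α (n + (N + 1)) * ‖e (n + (N + 1)) w‖ ^ 2) := by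
      refine Summable.tsum_le_tsum (fun n => ?_) hstail (hαtail.mul_left _)
      have h2 : s (n + (N + 1)) ≤ ε / 2 * α (n + (N + 1)) :=
        hN _ (by omega)
      calc s (n + (N + 1)) * ‖e (n + (N + 1)) w‖ ^ 2
          ≤ (ε / 2 * α (n + (N + 1))) * ‖e (n + (N + 1)) w‖ ^ 2 :=
            mul_le_mul_of_nonneg_right h2 (by positivity)
        _ = ε / 2 * (α (n + (N + 1)) * ‖e (n + (N + 1)) w‖ ^ 2) := by ring
    rw [tsum_mul_left] at h1
    refine h1.trans (mul_le_mul_of_nonneg_left ?_ (by linarith))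
    have hsplitα := (Summable.sum_add_tsum_nat_add (f := fun n => α n * ‖e n w‖ ^ 2) (N + 1) haw)
    have hnn : 0 ≤ ∑ n ∈ Finset.range (N + 1), α n * ‖e n w‖ ^ 2 :=
      Finset.sum_nonneg fun n _ => mul_nonneg (hα n).le (by positivity)
    linarith [hsplitα]
  calc (∑' n, s n * ‖e n w‖ ^ 2)
      = (∑ n ∈ Finset.range (N + 1), s n * ‖e n w‖ ^ 2)
        + ∑' n, s (n + (N + 1)) * ‖e (n + (N + 1)) w‖ ^ 2 := hsplit
    _ ≤ ε / 2 * A + ε / 2 * A := add_le_add ((hM w hw).trans hhead) htail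
    _ = ε * A := by ring
end
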